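/- arXiv:1203.4047 — 4 statements merged into one kernel-verified Lean document; each statement's English description precedes it below -/
import Mathlib

section
/- Let p be a prime, q = p^ν, and n ≥ 1. The image of the subgroup GL_{n+1}(𝔽_{q²}) under the map λ(T) = T · (conj T)ᵀ is exactly the set of invertible Hermitian matrices over 𝔽_{q²}, i.e., the set of H ∈ GL_{n+1}(𝔽_{q²}) with H = (conj H)ᵀ. -/
/-!
Let `σ(a) = a ^ q`, an involution of `𝔽_{q²}`, serve as the star operation, so that
`λ(T) = T * Tᴴ`. Every invertible Hermitian `H` is then `*`-congruent to `1`, by the Hermitian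
analogue of diagonalising a symmetric bilinear form. After a congruence, `H` has a nonzero
diagonal entry: if every diagonal entry vanishes, a transvection creates one, because the trace
`t ↦ t + t ^ q` is not identically zero. A Schur-complement step splits off this `1 × 1` block.
On a `1 × 1` block `d = d ^ q` we can write `d = s ^ (q + 1)`, because the norm
`𝔽_{q²}ˣ → 𝔽_qˣ` is onto.
-/

open Matrix Polynomial

namespace Matrix

section CommRing

variable {R : Type*} [CommRing R] {m n : Type*} [Fintype m] [DecidableEq m]
  [Fintype n] [DecidableEq n]

theorem isUnit_sub_mul_nonsing_inv_mul {A : Matrix m m R} {B : Matrix m n R} {C : Matrix n m R}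
    {D : Matrix n n R} (hU : IsUnit (fromBlocks A B C D)) (hD : IsUnit D) :
    IsUnit (A - B * D⁻¹ * C) := by
  let := invertibleOfIsUnitDet D ((isUnit_iff_isUnit_det D).1 hD)
  rw [isUnit_iff_isUnit_det, det_fromBlocks₂₂, invOf_eq_nonsing_inv] at hU
  exact (isUnit_iff_isUnit_det _).2 (isUnit_of_mul_isUnit_right hU)

variable [StarRing R]

def IsCongruentToOne (H : Matrix n n R) : Prop :=
  ∃ T : Matrix n n R, IsUnit T ∧ T * Tᴴ = H

namespace IsCongruentToOne

variable {H : Matrix n n R}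

theorem isHermitian (h : IsCongruentToOne H) : H.IsHermitian := by
  obtain ⟨T, -, rfl⟩ := h
  exact isHermitian_mul_conjTranspose_self T

theorem isUnit (h : IsCongruentToOne H) : IsUnit H := by
  obtain ⟨T, hT, rfl⟩ := h
  exact hT.mul ((isUnit_conjTranspose T).2 hT)

theorem mul_mul_conjTranspose (h : IsCongruentToOne H) {P : Matrix n n R} (hP : IsUnit P) :
    IsCongruentToOne (P * H * Pᴴ) := by
  obtain ⟨T, hT, rfl⟩ := h
  exact ⟨P * T, hP.mul hT, by simp only [conjTranspose_mul, Matrix.mul_assoc]⟩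

theorem submatrix (h : IsCongruentToOne H) (e : m ≃ n) :
    IsCongruentToOne (H.submatrix e e) := by
  obtain ⟨T, hT, rfl⟩ := h
  exact ⟨T.submatrix e e, (isUnit_submatrix_equiv e e).2 hT,
    by rw [conjTranspose_submatrix, submatrix_mul_equiv]⟩

theorem fromBlocks_zero {A : Matrix m m R} {D : Matrix n n R} (hA : IsCongruentToOne A)
    (hD : IsCongruentToOne D) : IsCongruentToOne (fromBlocks A 0 0 D) := by
  obtain ⟨S, hS, rfl⟩ := hA
  obtain ⟨T, hT, rfl⟩ := hD
  refine ⟨fromBlocks S 0 0 T, ?_, by simp [fromBlocks_conjTranspose, fromBlocks_multiply]⟩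
  rw [isUnit_iff_isUnit_det, det_fromBlocks_zero₂₁]
  exact ((isUnit_iff_isUnit_det S).1 hS).mul ((isUnit_iff_isUnit_det T).1 hT)

end IsCongruentToOne

theorem isCongruentToOne_mul_mul_conjTranspose_iff {H P : Matrix n n R} (hP : IsUnit P) :
    IsCongruentToOne (P * H * Pᴴ) ↔ IsCongruentToOne H := by
  refine ⟨fun h => ?_, fun h => h.mul_mul_conjTranspose hP⟩
  obtain ⟨u, rfl⟩ := hP
  convert h.mul_mul_conjTranspose u⁻¹.isUnit
  rw [← Matrix.mul_assoc, ← Matrix.mul_assoc, u.inv_mul, Matrix.one_mul, Matrix.mul_assoc,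
    ← conjTranspose_mul, u.inv_mul, conjTranspose_one, Matrix.mul_one]

theorem isCongruentToOne_submatrix_iff {H : Matrix n n R} (e : m ≃ n) :
    IsCongruentToOne (H.submatrix e e) ↔ IsCongruentToOne H := by
  refine ⟨fun h => ?_, fun h => h.submatrix e⟩
  simpa using h.submatrix e.symm

theorem fromBlocks_eq_mul_fromBlocks_zero_mul_conjTranspose (A : Matrix m m R) (B : Matrix m n R)
    {D : Matrix n n R} (hDu : IsUnit D) (hD : D.IsHermitian) :
    fromBlocks A B Bᴴ D = fromBlocks 1 (B * D⁻¹) 0 1 * fromBlocks (A - B * D⁻¹ * Bᴴ) 0 0 D *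
      (fromBlocks 1 (B * D⁻¹) 0 1)ᴴ := by
  let := invertibleOfIsUnitDet D ((isUnit_iff_isUnit_det D).1 hDu)
  rw [fromBlocks_eq_of_invertible₂₂, fromBlocks_conjTranspose, invOf_eq_nonsing_inv]
  simp [conjTranspose_nonsing_inv, hD.eq]

theorem isCongruentToOne_fromBlocks {A : Matrix m m R} {B : Matrix m n R} {D : Matrix n n R}
    (hD : IsCongruentToOne D) (hS : IsCongruentToOne (A - B * D⁻¹ * Bᴴ)) :
    IsCongruentToOne (fromBlocks A B Bᴴ D) := by
  have hL : IsUnit (fromBlocks 1 (B * D⁻¹) 0 1 : Matrix (m ⊕ n) (m ⊕ n) R) := by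
    simp [isUnit_iff_isUnit_det]
  rw [fromBlocks_eq_mul_fromBlocks_zero_mul_conjTranspose A B hD.isUnit hD.isHermitian,
    isCongruentToOne_mul_mul_conjTranspose_iff hL]
  exact hS.fromBlocks_zero hD

end CommRing

theorem conjTranspose_transvection {R : Type*} [CommRing R] [StarRing R] {n : Type*}
    [DecidableEq n] (i j : n) (c : R) :
    (transvection i j c)ᴴ = transvection j i (star c) := by
  rw [transvection, conjTranspose_add, conjTranspose_one, conjTranspose_single, transvection]

section Field

variable {K : Type*} [Field K] [StarRing K] {m n o : Type*} [Fintype m] [DecidableEq m]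
  [Fintype n] [DecidableEq n] [Fintype o] [DecidableEq o]

theorem IsHermitian.isCongruentToOne_of_unique [Unique n]
    (hnorm : ∀ a : K, star a = a → ∃ s, s * star s = a) {H : Matrix n n K} (hH : H.IsHermitian)
    (hU : IsUnit H) : IsCongruentToOne H := by
  obtain ⟨s, hs⟩ := hnorm _ (hH.apply default default)
  have hH0 : H default default ≠ 0 := by
    rwa [isUnit_iff_isUnit_det, det_unique, isUnit_iff_ne_zero] at hU
  refine ⟨of fun _ _ => s, ?_, ?_⟩
  · rw [isUnit_iff_isUnit_det, det_unique, isUnit_iff_ne_zero]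
    rintro rfl
    exact hH0 (by rw [← hs, zero_mul])
  · ext i j
    simp [Subsingleton.elim i default, Subsingleton.elim j default, mul_apply, hs]

theorem IsHermitian.exists_mul_mul_conjTranspose_apply_self_ne_zero [Nonempty n]
    (htrace : ∃ t : K, t + star t ≠ 0) {H : Matrix n n K} (hH : H.IsHermitian) (hU : IsUnit H) :
    ∃ P : Matrix n n K, IsUnit P ∧ ∃ j, (P * H * Pᴴ) j j ≠ 0 := by
  by_cases hdiag : ∃ j, H j j ≠ 0
  · obtain ⟨j, hj⟩ := hdiag
    exact ⟨1, isUnit_one, j, by simpa using hj⟩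
  push Not at hdiag
  obtain ⟨i, j, hji⟩ : ∃ i j, H j i ≠ 0 := by
    by_contra! h
    exact hU.ne_zero (Matrix.ext fun a b => h b a)
  have hij : i ≠ j := by
    rintro rfl
    exact hji (hdiag i)
  obtain ⟨t, ht⟩ := htrace
  refine ⟨transvection i j (t / H j i), ?_, i, ?_⟩
  · rw [isUnit_iff_isUnit_det, det_transvection_of_ne _ _ hij]
    exact isUnit_one
  · rw [conjTranspose_transvection, mul_transvection_apply_same, transvection_mul_apply_same,
      transvection_mul_apply_same, hdiag, hdiag, ← hH.apply i j, mul_zero, add_zero, zero_add,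
      ← star_mul', div_mul_cancel₀ t hji]
    exact ht

theorem IsHermitian.isCongruentToOne_of_apply_inr_ne_zero [Unique o]
    (hnorm : ∀ a : K, star a = a → ∃ s, s * star s = a)
    (ih : ∀ S : Matrix m m K, S.IsHermitian → IsUnit S → IsCongruentToOne S)
    {H : Matrix (m ⊕ o) (m ⊕ o) K} (hH : H.IsHermitian) (hU : IsUnit H)
    (hpivot : H (.inr default) (.inr default) ≠ 0) : IsCongruentToOne H := by
  obtain ⟨A, B, C, D, rfl⟩ : ∃ A B C D, H = Matrix.fromBlocks A B C D :=
    ⟨_, _, _, _, (fromBlocks_toBlocks H).symm⟩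
  obtain ⟨hA, rfl, -, hD⟩ := isHermitian_fromBlocks_iff.1 hH
  have hDu : IsUnit D := by
    rw [isUnit_iff_isUnit_det, det_unique]
    exact hpivot.isUnit
  exact isCongruentToOne_fromBlocks (hD.isCongruentToOne_of_unique hnorm hDu)
    (ih _ (hA.sub (isHermitian_mul_mul_conjTranspose B hD.inv))
      (isUnit_sub_mul_nonsing_inv_mul hU hDu))

theorem isCongruentToOne_of_isHermitian_of_isUnit_fin
    (hnorm : ∀ a : K, star a = a → ∃ s, s * star s = a) (htrace : ∃ t : K, t + star t ≠ 0) :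
    ∀ (m : ℕ) (H : Matrix (Fin m) (Fin m) K), H.IsHermitian → IsUnit H → IsCongruentToOne H
  | 0, _, _, _ => ⟨1, isUnit_one, Subsingleton.elim _ _⟩
  | m + 1, H, hH, hU => by
    obtain ⟨P, hP, j, hj⟩ := hH.exists_mul_mul_conjTranspose_apply_self_ne_zero htrace hU
    -- `e` moves the pivot `j` to the last index, which becomes the `1 × 1` block.
    let e : Fin m ⊕ Fin 1 ≃ Fin (m + 1) := finSumFinEquiv.trans (Equiv.swap (Fin.last m) j)
    have he : e (.inr default) = j := Equiv.swap_apply_left (Fin.last m) j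
    rw [← isCongruentToOne_mul_mul_conjTranspose_iff hP, ← isCongruentToOne_submatrix_iff e]
    refine ((isHermitian_mul_mul_conjTranspose P hH).submatrix e).isCongruentToOne_of_apply_inr_ne_zero
      hnorm (isCongruentToOne_of_isHermitian_of_isUnit_fin hnorm htrace m) ?_ ?_
    · exact (isUnit_submatrix_equiv e e).2 ((hP.mul hU).mul ((isUnit_conjTranspose P).2 hP))
    · rwa [submatrix_apply, he]

theorem IsHermitian.isCongruentToOne (hnorm : ∀ a : K, star a = a → ∃ s, s * star s = a)
    (htrace : ∃ t : K, t + star t ≠ 0) {H : Matrix n n K} (hH : H.IsHermitian) (hU : IsUnit H) :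
    IsCongruentToOne H := by
  let e := (Fintype.equivFin n).symm
  rw [← isCongruentToOne_submatrix_iff e]
  exact isCongruentToOne_of_isHermitian_of_isUnit_fin hnorm htrace _ _ (hH.submatrix e)
    ((isUnit_submatrix_equiv e e).2 hU)

end Field

end Matrix

theorem IsCyclic.exists_pow_eq_of_pow_eq_one {G : Type*} [CommGroup G] [IsCyclic G] [Finite G]
    {k d : ℕ} (hG : Nat.card G = k * d) {x : G} (hx : x ^ k = 1) : ∃ y, y ^ d = x := by
  have hd : 0 < d := Nat.pos_of_mul_pos_left (hG ▸ Nat.card_pos)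
  have hle : (powMonoidHom d : G →* G).range ≤ (powMonoidHom k).ker := by
    rintro _ ⟨y, rfl⟩
    rw [MonoidHom.mem_ker, powMonoidHom_apply, powMonoidHom_apply, ← pow_mul, mul_comm, ← hG,
      pow_card_eq_one']
  have hcard :
      Nat.card (powMonoidHom k : G →* G).ker ≤ Nat.card (powMonoidHom d : G →* G).range := by
    rw [IsCyclic.card_powMonoidHom_ker, IsCyclic.card_powMonoidHom_range, hG,
      Nat.gcd_mul_right_left, Nat.gcd_mul_left_left, Nat.mul_div_cancel _ hd]
  have hx' : x ∈ (powMonoidHom d : G →* G).range := by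
    rw [Subgroup.eq_of_le_of_card_ge hle hcard]
    exact hx
  exact hx'

namespace FiniteField

variable {K : Type*} [Field K] [Finite K] {q : ℕ}

theorem one_lt_of_card_eq_sq (hK : Nat.card K = q ^ 2) : 1 < q := by
  have := Finite.one_lt_card (α := K)
  rw [hK] at this
  by_contra! h
  interval_cases q <;> simp at this

theorem pow_pow_eq_self_of_card_eq_sq (hK : Nat.card K = q ^ 2) (a : K) : (a ^ q) ^ q = a := by
  let := Fintype.ofFinite K
  rw [← pow_mul, ← sq, ← hK, Nat.card_eq_fintype_card, pow_card]

theorem exists_mul_pow_eq_of_pow_eq (hK : Nat.card K = q ^ 2) {a : K} (ha : a ^ q = a) :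
    ∃ s : K, s * s ^ q = a := by
  rcases eq_or_ne a 0 with rfl | ha0
  · exact ⟨0, zero_mul _⟩
  have hq := one_lt_of_card_eq_sq hK
  have hunit : Units.mk0 a ha0 ^ (q - 1) = 1 := by
    refine Units.ext (mul_right_cancel₀ ha0 ?_)
    rw [Units.val_pow_eq_pow_val, Units.val_mk0, ← pow_succ, Nat.sub_add_cancel hq.le, ha,
      Units.val_one, one_mul]
  have hcard : Nat.card Kˣ = (q - 1) * (q + 1) := by
    rw [Nat.card_units, hK, mul_comm, ← Nat.sq_sub_sq, one_pow]
  obtain ⟨s, hs⟩ := IsCyclic.exists_pow_eq_of_pow_eq_one hcard hunit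
  exact ⟨s, by rw [← pow_succ', ← Units.val_pow_eq_pow_val, hs, Units.val_mk0]⟩

theorem exists_add_pow_ne_zero (hK : Nat.card K = q ^ 2) : ∃ t : K, t + t ^ q ≠ 0 := by
  have hq := one_lt_of_card_eq_sq hK
  have hdeg : (X ^ q + X : K[X]).natDegree = q := by
    rw [natDegree_add_eq_left_of_natDegree_lt] <;> simp [hq]
  have hf : (X ^ q + X : K[X]) ≠ 0 := ne_zero_of_natDegree_gt (hdeg ▸ hq)
  have hlt : ((X ^ q + X : K[X]).natDegree : Cardinal) < Cardinal.mk K := by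
    rw [hdeg, ← Nat.cast_card, hK, Nat.cast_lt]
    exact lt_self_pow₀ hq one_lt_two
  obtain ⟨t, ht⟩ := exists_eval_ne_zero_of_natDegree_lt_card _ hf hlt
  exact ⟨t, by simpa [add_comm] using ht⟩

end FiniteField

abbrev starRingOfInvolutive {R : Type*} [CommSemiring R] (σ : R →+* R)
    (hσ : Function.Involutive σ) : StarRing R where
  star := σ
  star_involutive := hσ
  star_mul a b := by rw [map_mul, mul_comm]
  star_add := map_add σ

theorem stmt_1_general (p ν n q : ℕ) [Fact p.Prime] (hν : 0 < ν) (hq : q = p ^ ν) :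
    {H : Matrix (Fin (n + 1)) (Fin (n + 1)) (GaloisField p (2 * ν)) |
        ∃ T : Matrix (Fin (n + 1)) (Fin (n + 1)) (GaloisField p (2 * ν)),
          IsUnit T ∧ T * (T.map fun a => a ^ q).transpose = H} =
      {H : Matrix (Fin (n + 1)) (Fin (n + 1)) (GaloisField p (2 * ν)) |
        IsUnit H ∧ H = (H.map fun a => a ^ q).transpose} := by
  subst hq
  have hK : Nat.card (GaloisField p (2 * ν)) = (p ^ ν) ^ 2 := by
    rw [GaloisField.card p (2 * ν) (by omega), ← pow_mul, mul_comm]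
  let := starRingOfInvolutive (iterateFrobenius (GaloisField p (2 * ν)) p ν)
    (FiniteField.pow_pow_eq_self_of_card_eq_sq hK)
  have hnorm := fun a => FiniteField.exists_mul_pow_eq_of_pow_eq hK (a := a)
  have htrace := FiniteField.exists_add_pow_ne_zero hK
  ext H
  refine ⟨?_, fun ⟨hU, hH⟩ => IsHermitian.isCongruentToOne hnorm htrace hH.symm hU⟩
  rintro ⟨T, hT, rfl⟩
  have hT' : IsCongruentToOne (T * Tᴴ) := ⟨T, hT, rfl⟩
  exact ⟨hT'.isUnit, hT'.isHermitian.symm⟩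

/-- The image of `GL_{n+1}(𝔽_{q²})` under `λ(T) = T ⬝ (conj T)ᵀ` is exactly the set of
invertible Hermitian matrices over `𝔽_{q²}`. -/
theorem stmt_1 (p ν n q : ℕ) [Fact p.Prime] (hν : 0 < ν) (hn : 1 ≤ n) (hq : q = p ^ ν) :
    {H : Matrix (Fin (n + 1)) (Fin (n + 1)) (GaloisField p (2 * ν)) |
        ∃ T : Matrix (Fin (n + 1)) (Fin (n + 1)) (GaloisField p (2 * ν)),
          IsUnit T ∧ T * (T.map fun a => a ^ q).transpose = H} =
      {H : Matrix (Fin (n + 1)) (Fin (n + 1)) (GaloisField p (2 * ν)) |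
        IsUnit H ∧ H = (H.map fun a => a ^ q).transpose} :=
  stmt_1_general p ν n q hν hq
end

section
/- Let p be a prime, q = p^ν, and n ≥ 1. For any two invertible Hermitian matrices H, H' ∈ GL_{n+1}(𝔽_{q²}) (i.e., H = (conj H)ᵀ and H' = (conj H')ᵀ) there exists T ∈ GL_{n+1}(𝔽_{q²}) such that T · H · (conj T)ᵀ = H'. -/
/-!
Give `𝔽_{q²}` the conjugation `a ↦ a ^ q`. A nonzero Hermitian form has an anisotropic vector,
because the trace `a + a ^ q` does not vanish identically (`X + X ^ q` has fewer than `q²` roots);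
splitting it off and passing to the Schur complement diagonalizes every Hermitian matrix by a
congruence. The diagonal entries of an invertible one are nonzero elements of `𝔽_q`, hence norms
`c ^ (q + 1)`: in the cyclic group `𝔽_{q²}ˣ` of order `(q + 1)(q - 1)` the `(q + 1)`-st powers are
exactly the solutions of `x ^ (q - 1) = 1`. Rescaling makes it congruent to the identity.
-/

open Matrix

namespace Matrix

variable {ι ι' R : Type*} [Fintype ι] [Fintype ι']

section CommRing

variable [CommRing R]

theorem det_one_updateRow [DecidableEq ι] (k : ι) (v : ι → R) :
    ((1 : Matrix ι ι R).updateRow k v).det = v k := by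
  have hv : ∑ i, v i • (1 : Matrix ι ι R) i = v := by
    ext j
    simp [Finset.sum_apply, one_apply]
  simpa [hv] using det_updateRow_sum (1 : Matrix ι ι R) k v

variable [StarRing R]

theorem IsHermitian.star_dotProduct_mulVec_star {H : Matrix ι ι R} (hH : H.IsHermitian)
    (u v : ι → R) :
    star (u ⬝ᵥ H *ᵥ star v) = v ⬝ᵥ H *ᵥ star u := by
  conv_lhs =>
    rw [← star_star u, ← star_dotProduct, star_mulVec, hH.eq, star_star, ← dotProduct_mulVec]

variable [DecidableEq ι] [DecidableEq ι']

def StarCongr (H H' : Matrix ι ι R) : Prop :=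
  ∃ T : Matrix ι ι R, IsUnit T ∧ T * H * Tᴴ = H'

namespace StarCongr

variable {H H' H'' : Matrix ι ι R}

theorem refl (H : Matrix ι ι R) : StarCongr H H :=
  ⟨1, isUnit_one, by simp⟩

theorem trans (h : StarCongr H H') (h' : StarCongr H' H'') : StarCongr H H'' := by
  obtain ⟨T, hT, rfl⟩ := h
  obtain ⟨T', hT', rfl⟩ := h'
  exact ⟨T' * T, hT'.mul hT, by simp only [conjTranspose_mul, Matrix.mul_assoc]⟩

theorem symm (h : StarCongr H H') : StarCongr H' H := by
  obtain ⟨T, hT, rfl⟩ := h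
  have hdet := (isUnit_iff_isUnit_det T).mp hT
  refine ⟨T⁻¹, isUnit_nonsing_inv_iff.mpr hT, ?_⟩
  rw [conjTranspose_nonsing_inv, Matrix.mul_assoc, Matrix.mul_assoc, mul_nonsing_inv _ ?_,
    Matrix.mul_one, ← Matrix.mul_assoc, nonsing_inv_mul _ hdet, Matrix.one_mul]
  rwa [det_conjTranspose, isUnit_star]

theorem isUnit (h : StarCongr H H') (hH : IsUnit H) : IsUnit H' := by
  obtain ⟨T, hT, rfl⟩ := h
  exact (hT.mul hH).mul (by rwa [← star_eq_conjTranspose, isUnit_star])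

theorem isHermitian (h : StarCongr H H') (hH : H.IsHermitian) : H'.IsHermitian := by
  obtain ⟨T, -, rfl⟩ := h
  exact isHermitian_mul_mul_conjTranspose T hH

theorem submatrix (h : StarCongr H H') (e : ι' ≃ ι) :
    StarCongr (H.submatrix e e) (H'.submatrix e e) := by
  obtain ⟨T, hT, rfl⟩ := h
  refine ⟨T.submatrix e e, ?_, ?_⟩
  · rwa [isUnit_iff_isUnit_det, det_submatrix_equiv_self, ← isUnit_iff_isUnit_det]
  · rw [conjTranspose_submatrix, submatrix_mul_equiv, submatrix_mul_equiv]

theorem fromBlocks_zero {D D' : Matrix ι' ι' R} (A : Matrix ι ι R) (h : StarCongr D D') :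
    StarCongr (fromBlocks A 0 0 D) (fromBlocks A 0 0 D') := by
  obtain ⟨T, hT, rfl⟩ := h
  refine ⟨fromBlocks 1 0 0 T, ?_, ?_⟩
  · rw [isUnit_iff_isUnit_det, det_fromBlocks_zero₁₂, det_one, one_mul, ← isUnit_iff_isUnit_det]
    exact hT
  · simp [fromBlocks_conjTranspose, fromBlocks_multiply]

end StarCongr

theorem starCongr_fromBlocks_schur {A : Matrix ι ι R} [Invertible A] (hA : A.IsHermitian)
    (C : Matrix ι' ι R) (D : Matrix ι' ι' R) :
    StarCongr (fromBlocks A 0 0 (D - C * ⅟A * Cᴴ)) (fromBlocks A Cᴴ C D) := by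
  let L : Matrix (ι ⊕ ι') (ι ⊕ ι') R := fromBlocks 1 0 (C * ⅟A) 1
  have hL : Lᴴ = fromBlocks 1 (⅟A * Cᴴ) 0 1 := by
    rw [fromBlocks_conjTranspose, conjTranspose_mul, invOf_eq_nonsing_inv,
      conjTranspose_nonsing_inv, hA.eq]
    simp
  refine ⟨L, ?_, ?_⟩
  · rw [isUnit_iff_isUnit_det, det_fromBlocks_zero₁₂, det_one, det_one, one_mul]
    exact isUnit_one
  · rw [hL, fromBlocks_eq_of_invertible₁₁ A Cᴴ C D]

end CommRing

section Field

variable {K : Type*} [Field K] [StarRing K] [DecidableEq ι]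

theorem IsHermitian.exists_dotProduct_mulVec_star_ne_zero (htr : ∃ μ : K, μ + star μ ≠ 0)
    {H : Matrix ι ι K} (hH : H.IsHermitian) (hH0 : H ≠ 0) :
    ∃ v : ι → K, v ⬝ᵥ H *ᵥ star v ≠ 0 := by
  by_contra! h
  obtain ⟨μ, hμ⟩ := htr
  have hpolar (u v : ι → K) : u ⬝ᵥ H *ᵥ star v + star (u ⬝ᵥ H *ᵥ star v) = 0 := by
    have huv := h (u + v)
    simp only [star_add, mulVec_add, dotProduct_add, add_dotProduct, h u, h v] at huv
    rw [hH.star_dotProduct_mulVec_star]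
    linear_combination huv
  obtain ⟨i, j, hij⟩ : ∃ i j, H i j ≠ 0 := by
    by_contra! h0
    exact hH0 (Matrix.ext h0)
  have := hpolar ((μ / H i j) • Pi.single i 1) (Pi.single j 1)
  simp [div_mul_cancel₀ _ hij] at this
  exact hμ this

theorem IsHermitian.exists_starCongr_apply_self_ne_zero (htr : ∃ μ : K, μ + star μ ≠ 0)
    {H : Matrix ι ι K} (hH : H.IsHermitian) (hH0 : H ≠ 0) :
    ∃ (H' : Matrix ι ι K) (k : ι), StarCongr H H' ∧ H' k k ≠ 0 := by
  obtain ⟨v, hv⟩ := hH.exists_dotProduct_mulVec_star_ne_zero htr hH0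
  obtain ⟨k, hk⟩ : ∃ k, v k ≠ 0 := by
    by_contra! h0
    exact hv (by simp [funext h0])
  let T := (1 : Matrix ι ι K).updateRow k v
  refine ⟨T * H * Tᴴ, k, ⟨T, ?_, rfl⟩, ?_⟩
  · rw [isUnit_iff_isUnit_det, det_one_updateRow]
    exact hk.isUnit
  · rw [mul_mul_apply]
    show T k ⬝ᵥ H *ᵥ star (T k) ≠ 0
    simpa [T] using hv

theorem IsHermitian.exists_starCongr_fromBlocks {H : Matrix ι ι K} (hH : H.IsHermitian) {k : ι}
    (hk : H k k ≠ 0) :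
    ∃ S : Matrix {i // ¬i = k} {i // ¬i = k} K, S.IsHermitian ∧
      StarCongr (H.submatrix (Equiv.sumCompl (· = k)) (Equiv.sumCompl (· = k)))
        (Matrix.fromBlocks (diagonal fun _ => H k k) 0 0 S) := by
  set M := H.submatrix (Equiv.sumCompl (· = k)) (Equiv.sumCompl (· = k))
  set A : Matrix {i // i = k} {i // i = k} K := diagonal fun _ => H k k
  have hMA : M.toBlocks₁₁ = A := by
    ext ⟨i, rfl⟩ ⟨j, rfl⟩
    simp [M, A, toBlocks₁₁]
  have hM : M.IsHermitian := hH.submatrix _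
  rw [← M.fromBlocks_toBlocks, hMA] at hM ⊢
  obtain ⟨hA, -, hCB, -⟩ := isHermitian_fromBlocks_iff.mp hM
  have : Invertible A := A.invertibleOfIsUnitDet (by simp [A, hk])
  have hschur := starCongr_fromBlocks_schur hA M.toBlocks₂₁ M.toBlocks₂₂
  rw [hCB] at hschur
  refine ⟨_, ?_, hschur.symm⟩
  exact (isHermitian_fromBlocks_iff.mp (hschur.symm.isHermitian hM)).2.2.2

theorem IsHermitian.exists_starCongr_diagonal (htr : ∃ μ : K, μ + star μ ≠ 0)
    {H : Matrix ι ι K} (hH : H.IsHermitian) : ∃ d : ι → K, StarCongr H (diagonal d) := by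
  induction hn : Fintype.card ι using Nat.strong_induction_on generalizing ι with
  | _ n ih =>
  obtain rfl | hH0 := eq_or_ne H 0
  · exact ⟨0, by simpa using StarCongr.refl 0⟩
  obtain ⟨H₁, k, hH₁, hk⟩ := hH.exists_starCongr_apply_self_ne_zero htr hH0
  obtain ⟨S, hS, hHS⟩ := (hH₁.isHermitian hH).exists_starCongr_fromBlocks hk
  have hcard : Fintype.card {i // ¬i = k} < n := hn ▸ Fintype.card_subtype_lt (not_not.2 rfl)
  obtain ⟨d, hd⟩ := ih _ hcard hS rfl
  have := (hHS.trans (hd.fromBlocks_zero _)).submatrix (Equiv.sumCompl (· = k)).symm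
  rw [fromBlocks_diagonal, submatrix_diagonal_equiv, submatrix_submatrix] at this
  exact ⟨_, hH₁.trans (by simpa using this)⟩

theorem starCongr_diagonal_one (hnorm : ∀ a : K, a ≠ 0 → star a = a → ∃ c, c * star c = a)
    {d : ι → K} (hd : ∀ i, d i ≠ 0) (hd' : ∀ i, star (d i) = d i) :
    StarCongr (diagonal d) 1 := by
  choose c hc using fun i => hnorm (d i)⁻¹ (inv_ne_zero (hd i)) (by rw [star_inv₀, hd'])
  refine ⟨diagonal c, isUnit_diagonal.mpr (Pi.isUnit_iff.mpr fun i => ?_), ?_⟩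
  · exact (left_ne_zero_of_mul (hc i ▸ inv_ne_zero (hd i))).isUnit
  · rw [diagonal_conjTranspose, diagonal_mul_diagonal, diagonal_mul_diagonal, ← diagonal_one]
    congr 1
    funext i
    calc c i * d i * star (c i) = d i * (c i * star (c i)) := by ring
      _ = 1 := by rw [hc, mul_inv_cancel₀ (hd i)]

theorem IsHermitian.starCongr_one (htr : ∃ μ : K, μ + star μ ≠ 0)
    (hnorm : ∀ a : K, a ≠ 0 → star a = a → ∃ c, c * star c = a)
    {H : Matrix ι ι K} (hH : H.IsHermitian) (hHu : IsUnit H) : StarCongr H 1 := by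
  obtain ⟨d, hd⟩ := hH.exists_starCongr_diagonal htr
  have hdu := isUnit_diagonal.mp (hd.isUnit hHu)
  have hdh := isHermitian_diagonal_iff.mp (hd.isHermitian hH)
  exact hd.trans (starCongr_diagonal_one hnorm (fun i => (Pi.isUnit_iff.mp hdu i).ne_zero) hdh)

end Field

end Matrix

theorem IsCyclic.range_powMonoidHom_eq_ker {G : Type*} [CommGroup G] [IsCyclic G] [Finite G]
    {m k : ℕ} (h : Nat.card G = m * k) :
    (powMonoidHom m : G →* G).range = (powMonoidHom k).ker := by
  have hm : 0 < m := Nat.pos_of_ne_zero fun hm => Nat.card_pos.ne' (by simpa [hm] using h)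
  refine Subgroup.eq_of_le_of_card_ge ?_ ?_
  · rintro _ ⟨x, rfl⟩
    simp [← pow_mul, ← h, pow_card_eq_one']
  · rw [IsCyclic.card_powMonoidHom_ker, IsCyclic.card_powMonoidHom_range, h,
      Nat.gcd_mul_left_left, Nat.gcd_mul_right_left, Nat.mul_div_cancel_left k hm]

namespace FiniteField

variable {K : Type*} [Field K]

theorem exists_add_pow_ne_zero_s3 {q : ℕ} (hq : 1 < q) (hqK : q < Cardinal.mk K) :
    ∃ μ : K, μ + μ ^ q ≠ 0 := by
  open Polynomial in
  have hdeg : (X + X ^ q : K[X]).natDegree = q := by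
    rw [natDegree_add_eq_right_of_natDegree_lt] <;> simp [hq]
  obtain ⟨μ, hμ⟩ := exists_eval_ne_zero_of_natDegree_lt_card (X + X ^ q : K[X])
    (ne_zero_of_natDegree_gt (hdeg ▸ hq)) (by rwa [hdeg])
  exact ⟨μ, by simpa using hμ⟩

theorem exists_mul_pow_eq [Finite K] {q : ℕ} (hK : Nat.card K = q ^ 2) {a : K} (ha : a ≠ 0)
    (hfix : a ^ q = a) : ∃ c : K, c * c ^ q = a := by
  obtain ⟨r, rfl⟩ : ∃ r, q = r + 1 :=
    Nat.exists_eq_succ_of_ne_zero fun h => Nat.card_pos.ne' (by simpa [h] using hK)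
  have hunits : Nat.card Kˣ = (r + 2) * r := by
    rw [Nat.card_units, hK]
    ring_nf
    omega
  have ha' : Units.mk0 a ha ∈ (powMonoidHom r : Kˣ →* Kˣ).ker := by
    ext
    simpa [pow_succ, ha] using hfix
  rw [← IsCyclic.range_powMonoidHom_eq_ker hunits] at ha'
  obtain ⟨c, hc⟩ := ha'
  refine ⟨c, ?_⟩
  simpa [← pow_succ', Units.ext_iff] using hc

abbrev frobeniusStarRing (K : Type*) [Field K] [Finite K] (p ν : ℕ) [Fact p.Prime] [CharP K p]
    (hK : Nat.card K = (p ^ ν) ^ 2) : StarRing K where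
  star a := a ^ p ^ ν
  star_involutive a := by
    have := Fintype.ofFinite K
    show (a ^ p ^ ν) ^ p ^ ν = a
    rw [← pow_mul, ← sq, ← hK, ← Fintype.card_eq_nat_card, FiniteField.pow_card]
  star_mul a b := by rw [mul_pow, mul_comm]
  star_add a b := add_pow_char_pow a b p ν

end FiniteField

theorem stmt_3_general (p ν n q : ℕ) [Fact p.Prime] (hν : 0 < ν) (hq : q = p ^ ν)
    (H H' : Matrix (Fin (n + 1)) (Fin (n + 1)) (GaloisField p (2 * ν)))
    (hH : IsUnit H) (hH' : IsUnit H')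
    (hHerm : H = (H.map fun a => a ^ q).transpose)
    (hHerm' : H' = (H'.map fun a => a ^ q).transpose) :
    ∃ T : Matrix (Fin (n + 1)) (Fin (n + 1)) (GaloisField p (2 * ν)),
      IsUnit T ∧ T * H * (T.map fun a => a ^ q).transpose = H' := by
  subst hq
  have hK : Nat.card (GaloisField p (2 * ν)) = (p ^ ν) ^ 2 := by
    rw [GaloisField.card p _ (by omega), ← pow_mul, mul_comm]
  let _ := FiniteField.frobeniusStarRing (GaloisField p (2 * ν)) p ν hK
  have hq : 1 < p ^ ν := Nat.one_lt_pow hν.ne' (Fact.out : p.Prime).one_lt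
  have htr : ∃ μ : GaloisField p (2 * ν), μ + star μ ≠ 0 := by
    refine FiniteField.exists_add_pow_ne_zero_s3 hq ?_
    rw [← Nat.cast_card, hK]
    exact_mod_cast lt_self_pow₀ hq one_lt_two
  have hnorm (a : GaloisField p (2 * ν)) (ha : a ≠ 0) (hfix : star a = a) : ∃ c, c * star c = a :=
    FiniteField.exists_mul_pow_eq hK ha hfix
  -- `Hᴴ` unfolds to `(H.map (· ^ p ^ ν))ᵀ` under the Frobenius star
  replace hHerm : H.IsHermitian := hHerm.symm
  replace hHerm' : H'.IsHermitian := hHerm'.symm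
  exact (hHerm.starCongr_one htr hnorm hH).trans (hHerm'.starCongr_one htr hnorm hH').symm

/-- For any two invertible Hermitian matrices `H, H'` over `𝔽_{q²}` there is
`T ∈ GL_{n+1}(𝔽_{q²})` with `T ⬝ H ⬝ (conj T)ᵀ = H'`. -/
theorem stmt_3 (p ν n q : ℕ) [Fact p.Prime] (hν : 0 < ν) (hn : 1 ≤ n) (hq : q = p ^ ν)
    (H H' : Matrix (Fin (n + 1)) (Fin (n + 1)) (GaloisField p (2 * ν)))
    (hH : IsUnit H) (hH' : IsUnit H')
    (hHerm : H = (H.map fun a => a ^ q).transpose)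
    (hHerm' : H' = (H'.map fun a => a ^ q).transpose) :
    ∃ T : Matrix (Fin (n + 1)) (Fin (n + 1)) (GaloisField p (2 * ν)),
      IsUnit T ∧ T * H * (T.map fun a => a ^ q).transpose = H' :=
  stmt_3_general p ν n q hν hq H H' hH hH' hHerm hHerm'
end

section
/- Let p be a prime, q = p^ν, and let k be an algebraically closed field of characteristic p containing 𝔽_{q²}. Let n ≥ 2 satisfy n ≢ 0 (mod p) and 2n ≤ q. Let A = (a_{ij})_{0 ≤ i,j ≤ n} be a matrix over k and let h = Σ_{ν=1}^{q} b_ν t^ν ∈ k[t] with b_1 ≠ 0 and b_q ≠ 0, such that Σ_{i,j} a_{ij} t^{i+qj} = h^n in k[t]. Then b_μ = 0 for all μ with n < μ < q. -/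
/-!
Induct downwards on `μ ∈ (n, q)`: if `b_m = 0` for `μ < m < q`, then `h = f + b_q t^q` with
`deg f ≤ μ`, so in `hⁿ` the monomial `t^{q(n-1)+μ}` only arises from `n · (b_q t^q)^{n-1} · f`
and its coefficient is `n b_q^{n-1} b_μ`. But `q(n-1)+μ` is not of the form `i + qj` with
`0 ≤ i, j ≤ n`, so the coefficient vanishes on the left-hand side, and `p ∤ n` gives `b_μ = 0`.
-/

open Polynomial

namespace Polynomial

theorem coeff_add_C_mul_X_pow_pow_succ {R : Type*} [CommSemiring R] {f : R[X]} {c : R}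
    {d q : ℕ} (hf : f.natDegree ≤ d) (hdq : d < q) (n : ℕ) :
    ((f + C c * X ^ q) ^ (n + 1)).coeff (q * n + d) = (n + 1) * c ^ n * f.coeff d := by
  set g := f + C c * X ^ q
  induction n with
  | zero => simp [g, hdq.ne]
  | succ n ih =>
    have hg : g.natDegree ≤ q :=
      natDegree_add_le_of_degree_le (hf.trans hdq.le) (natDegree_C_mul_X_pow_le c q)
    have hgq : g.coeff q = c := by
      simp [g, coeff_eq_zero_of_natDegree_lt (hf.trans_lt hdq)]
    have htop : (g ^ (n + 1) * f).coeff ((n + 1) * q + d) = c ^ (n + 1) * f.coeff d := by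
      rw [coeff_mul_add_eq_of_natDegree_le (natDegree_pow_le_of_le _ hg) hf,
        coeff_pow_of_natDegree_le hg, hgq]
    have hshift : (g ^ (n + 1) * (C c * X ^ q)).coeff (q * n + d + q) =
        c * (g ^ (n + 1)).coeff (q * n + d) := by
      rw [mul_left_comm, coeff_C_mul, coeff_mul_X_pow]
    calc (g ^ (n + 1 + 1)).coeff (q * (n + 1) + d)
        = (g ^ (n + 1) * f).coeff ((n + 1) * q + d) +
            (g ^ (n + 1) * (C c * X ^ q)).coeff (q * n + d + q) := by
          rw [pow_succ _ (n + 1), mul_add, coeff_add]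
          congr 2 <;> ring
      _ = (↑(n + 1) + 1) * c ^ (n + 1) * f.coeff d := by
          rw [htop, hshift, ih]
          push_cast
          ring

theorem coeff_pow_succ_of_coeff_eq_zero {R : Type*} [CommRing R] {g : R[X]} {d q : ℕ}
    (hdq : d < q) (hg : g.natDegree ≤ q) (hgap : ∀ m, d < m → m < q → g.coeff m = 0) (n : ℕ) :
    (g ^ (n + 1)).coeff (q * n + d) = (n + 1) * g.coeff q ^ n * g.coeff d := by
  set f := g - C (g.coeff q) * X ^ q
  have hf : f.natDegree ≤ d := by
    refine natDegree_le_iff_coeff_eq_zero.2 fun m hm => ?_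
    rcases lt_trichotomy m q with hmq | rfl | hqm
    · simp [f, hmq.ne, hgap m (by exact_mod_cast hm) hmq]
    · simp [f]
    · simp [f, hqm.ne', coeff_eq_zero_of_natDegree_lt (hg.trans_lt hqm)]
  have hfd : f.coeff d = g.coeff d := by simp [f, hdq.ne]
  rw [← hfd, ← coeff_add_C_mul_X_pow_pow_succ hf hdq, sub_add_cancel]

theorem coeff_eq_zero_of_coeff_pow_succ_eq_zero {R : Type*} [CommRing R] [NoZeroDivisors R]
    {g : R[X]} {q n l : ℕ} (hg : g.natDegree ≤ q) (hn : (n + 1 : R) ≠ 0) (hq : g.coeff q ≠ 0)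
    (hpow : ∀ μ, l < μ → μ < q → (g ^ (n + 1)).coeff (q * n + μ) = 0) :
    ∀ μ, l < μ → μ < q → g.coeff μ = 0 := by
  intro μ hlμ hμq
  obtain ⟨r, hr⟩ : ∃ r, q - μ = r := ⟨_, rfl⟩
  induction r using Nat.strong_induction_on generalizing μ with
  | _ r ih =>
    have hgap : ∀ m, μ < m → m < q → g.coeff m = 0 :=
      fun m hμm hmq => ih (q - m) (by omega) m (by omega) hmq rfl
    have hcoeff := coeff_pow_succ_of_coeff_eq_zero hμq hg hgap n
    rw [hpow μ hlμ hμq, eq_comm] at hcoeff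
    simpa [hn, hq, pow_ne_zero] using hcoeff

end Polynomial

theorem add_mul_ne_mul_add {i j m q μ : ℕ} (hi : i ≤ m + 1) (hj : j ≤ m + 1) (hmμ : m + 1 < μ)
    (hμq : μ < q) : i + q * j ≠ q * m + μ := by
  rcases Nat.lt_or_ge j (m + 1) with hjm | hjm
  · have : q * j ≤ q * m := Nat.mul_le_mul_left q (by omega)
    omega
  · obtain rfl : j = m + 1 := by omega
    rw [mul_add_one]
    omega

open Polynomial in
theorem stmt_8_general (p n q : ℕ)
    (k : Type*) [Field k] [CharP k p]
    (hn : 2 ≤ n) (hnp : ¬ p ∣ n)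
    (A : Matrix (Fin (n + 1)) (Fin (n + 1)) k) (b : ℕ → k)
    (hbq : b q ≠ 0)
    (heq : (∑ i : Fin (n + 1), ∑ j : Fin (n + 1), C (A i j) * X ^ ((i : ℕ) + q * (j : ℕ)))
        = (∑ μ ∈ Finset.Icc 1 q, C (b μ) * X ^ μ) ^ n) :
    ∀ μ : ℕ, n < μ → μ < q → b μ = 0 := by
  set h : k[X] := ∑ μ ∈ Finset.Icc 1 q, C (b μ) * X ^ μ
  have hcoeff (μ : ℕ) (h1 : 1 ≤ μ) (hq : μ ≤ q) : h.coeff μ = b μ := by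
    simp [h, h1, hq]
  have hdeg : h.natDegree ≤ q := natDegree_sum_le_of_forall_le _ _ fun μ hμ =>
    (natDegree_C_mul_X_pow_le _ _).trans (Finset.mem_Icc.1 hμ).2
  obtain ⟨m, rfl⟩ : ∃ m, n = m + 1 := ⟨n - 1, by omega⟩
  have hn0 : ((m + 1 : ℕ) : k) ≠ 0 := by rwa [Ne, CharP.cast_eq_zero_iff k p]
  have hpow (μ : ℕ) (hmμ : m + 1 < μ) (hμq : μ < q) : (h ^ (m + 1)).coeff (q * m + μ) = 0 := by
    simp only [h, ← heq, finsetSum_coeff, coeff_C_mul_X_pow]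
    refine Finset.sum_eq_zero fun i _ => Finset.sum_eq_zero fun j _ => ?_
    rw [if_neg (add_mul_ne_mul_add (by omega) (by omega) hmμ hμq).symm]
  intro μ hmμ hμq
  rw [← hcoeff μ (by omega) hμq.le]
  exact coeff_eq_zero_of_coeff_pow_succ_eq_zero hdeg (by exact_mod_cast hn0)
    (by rwa [hcoeff q (by omega) le_rfl]) hpow μ hmμ hμq

open Polynomial in
/-- If `Σ aᵢⱼ t^{i+qj} = hⁿ` with `h = Σ_{μ=1}^{q} b_μ t^μ`, `b_1 ≠ 0`, `b_q ≠ 0`,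
`p ∤ n` and `2n ≤ q`, then `b_μ = 0` for `n < μ < q`. -/
theorem stmt_8 (p ν n q : ℕ) [Fact p.Prime] (hν : 0 < ν) (hq : q = p ^ ν)
    (k : Type*) [Field k] [IsAlgClosed k] [CharP k p] [Algebra (GaloisField p (2 * ν)) k]
    (hn : 2 ≤ n) (hnp : ¬ p ∣ n) (h2n : 2 * n ≤ q)
    (A : Matrix (Fin (n + 1)) (Fin (n + 1)) k) (b : ℕ → k)
    (hb1 : b 1 ≠ 0) (hbq : b q ≠ 0)
    (heq : (∑ i : Fin (n + 1), ∑ j : Fin (n + 1), C (A i j) * X ^ ((i : ℕ) + q * (j : ℕ)))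
        = (∑ μ ∈ Finset.Icc 1 q, C (b μ) * X ^ μ) ^ n) :
    ∀ μ : ℕ, n < μ → μ < q → b μ = 0 :=
  stmt_8_general p n q k hn hnp A b hbq heq
end

section
/- Let p be a prime, q = p^ν, and let k be an algebraically closed field of characteristic p containing 𝔽_{q²}. Let n ≥ 2 satisfy n ≢ 0 (mod p) and 2n ≤ q. Let A = (a_{ij})_{0 ≤ i,j ≤ n} be a matrix over k and let h = Σ_{ν=1}^{q} b_ν t^ν ∈ k[t] with b_1 ≠ 0 and b_q ≠ 0, such that Σ_{i,j} a_{ij} t^{i+qj} = h^n in k[t]. Then b_μ = 0 for all μ with 1 < μ < q − n + 1. -/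
/-!
Write `h = X * s`, so `s(0) = b₁`. If `μ` is the least index in `(1, q - n + 1)` with `b_μ ≠ 0`,
then `s - b₁` is divisible by `X ^ (μ - 1)`, and expanding `(b₁ + (s - b₁))ⁿ` to first order shows
that the coefficient of `t ^ (n + μ - 1)` in `hⁿ` is `n b₁ⁿ⁻¹ b_μ`. On the other side,
`n < n + μ - 1 < q`, and no exponent `i + q j` with `i ≤ n` lies strictly between `n` and `q`;
so `n b₁ⁿ⁻¹ b_μ = 0`, which contradicts `p ∤ n` and `b₁ ≠ 0`.
-/

namespace Polynomial

theorem coeff_pow_of_X_pow_dvd_sub_C {R : Type*} [CommRing R] {a : R} {s : R[X]} {m : ℕ}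
    (hm : m ≠ 0) (hs : X ^ m ∣ s - C a) (n : ℕ) :
    (s ^ n).coeff m = n * a ^ (n - 1) * s.coeff m := by
  obtain ⟨Q, hQ⟩ := sq_dvd_add_pow_sub_sub (s - C a) (C a) n
  have hsq : X ^ (m + 1) ∣ (s - C a) ^ 2 * Q := by
    have h2 : X ^ (m * 2) ∣ (s - C a) ^ 2 := pow_mul (X : R[X]) m 2 ▸ pow_dvd_pow_of_dvd hs 2
    exact (pow_dvd_pow X (by omega)).trans (h2.mul_right Q)
  have hexpand : s ^ n = C (a ^ n) + C (a ^ (n - 1) * n) * (s - C a) + (s - C a) ^ 2 * Q := by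
    rw [← hQ, C_mul, C_pow, C_pow, map_natCast]
    ring
  rw [hexpand, coeff_add, coeff_add, coeff_C, if_neg hm, coeff_C_mul, coeff_sub, coeff_C,
    if_neg hm, sub_zero, X_pow_dvd_iff.mp hsq m m.lt_succ_self]
  ring

theorem coeff_sum_C_mul_X_pow_add_mul_eq_zero {R : Type*} [Semiring R] {n m q d : ℕ}
    (A : Matrix (Fin (n + 1)) (Fin m) R) (hnd : n < d) (hdq : d < q) :
    (∑ i, ∑ j, C (A i j) * X ^ ((i : ℕ) + q * (j : ℕ))).coeff d = 0 := by
  simp only [finsetSum_coeff, coeff_C_mul_X_pow]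
  refine Finset.sum_eq_zero fun i _ => Finset.sum_eq_zero fun j _ => if_neg ?_
  have hi := i.isLt
  rcases Nat.eq_zero_or_pos (j : ℕ) with hj | hj
  · rw [hj]
    omega
  · have := Nat.le_mul_of_pos_right q hj
    omega

end Polynomial

open Polynomial in
theorem stmt_9_general (p n q : ℕ)
    (k : Type*) [Field k] [CharP k p]
    (hnp : ¬ p ∣ n)
    (A : Matrix (Fin (n + 1)) (Fin (n + 1)) k) (b : ℕ → k)
    (hb1 : b 1 ≠ 0)
    (heq : (∑ i : Fin (n + 1), ∑ j : Fin (n + 1), C (A i j) * X ^ ((i : ℕ) + q * (j : ℕ)))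
        = (∑ μ ∈ Finset.Icc 1 q, C (b μ) * X ^ μ) ^ n) :
    ∀ μ : ℕ, 1 < μ → μ < q - n + 1 → b μ = 0 := by
  set h := ∑ μ ∈ Finset.Icc 1 q, C (b μ) * X ^ μ
  have hcoeff (d : ℕ) : h.coeff d = if d ∈ Finset.Icc 1 q then b d else 0 := by
    simp [h, finsetSum_coeff]
  obtain ⟨s, hXs⟩ : X ∣ h := X_dvd_iff.mpr (by simp [hcoeff])
  have hscoeff (d : ℕ) : s.coeff d = h.coeff (d + 1) := by rw [hXs, coeff_X_mul]
  rw [hXs] at heq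
  intro μ
  induction μ using Nat.strong_induction_on with
  | _ μ IH =>
  intro hμ1 hμq
  have hs : X ^ (μ - 1) ∣ s - C (b 1) := by
    refine X_pow_dvd_iff.mpr fun d hd => ?_
    rw [coeff_sub, coeff_C, hscoeff, hcoeff]
    rcases d with _ | d
    · simp [show 1 ≤ q by omega]
    · simp [IH (d + 2) (by omega) (by omega) (by omega)]
  have hsμ : s.coeff (μ - 1) = b μ := by
    rw [hscoeff, Nat.sub_add_cancel hμ1.le, hcoeff, if_pos (Finset.mem_Icc.mpr ⟨by omega, by omega⟩)]
  have hcoeff_eq := congrArg (coeff · (n + (μ - 1))) heq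
  rw [coeff_sum_C_mul_X_pow_add_mul_eq_zero A (by omega) (by omega), mul_pow, coeff_X_pow_mul',
    if_pos (by omega), Nat.add_sub_cancel_left, coeff_pow_of_X_pow_dvd_sub_C (by omega) hs,
    hsμ] at hcoeff_eq
  have hn : (n : k) ≠ 0 := by rwa [Ne, CharP.cast_eq_zero_iff k p]
  exact (mul_eq_zero.mp hcoeff_eq.symm).resolve_left (mul_ne_zero hn (pow_ne_zero _ hb1))

open Polynomial in
/-- If `Σ aᵢⱼ t^{i+qj} = hⁿ` with `h = Σ_{μ=1}^{q} b_μ t^μ`, `b_1 ≠ 0`, `b_q ≠ 0`,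
`p ∤ n` and `2n ≤ q`, then `b_μ = 0` for `1 < μ < q - n + 1`. -/
theorem stmt_9 (p ν n q : ℕ) [Fact p.Prime] (hν : 0 < ν) (hq : q = p ^ ν)
    (k : Type*) [Field k] [IsAlgClosed k] [CharP k p] [Algebra (GaloisField p (2 * ν)) k]
    (hn : 2 ≤ n) (hnp : ¬ p ∣ n) (h2n : 2 * n ≤ q)
    (A : Matrix (Fin (n + 1)) (Fin (n + 1)) k) (b : ℕ → k)
    (hb1 : b 1 ≠ 0) (hbq : b q ≠ 0)
    (heq : (∑ i : Fin (n + 1), ∑ j : Fin (n + 1), C (A i j) * X ^ ((i : ℕ) + q * (j : ℕ)))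
        = (∑ μ ∈ Finset.Icc 1 q, C (b μ) * X ^ μ) ^ n) :
    ∀ μ : ℕ, 1 < μ → μ < q - n + 1 → b μ = 0 :=
  stmt_9_general p n q k hnp A b hb1 heq
end
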